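/- arXiv:1107.4427 — 2 statements merged into one kernel-verified Lean document; each statement's English description precedes it below -/
import Mathlib

section
/- Let A be the (n+1)-dimensional n-ary algebra of type (C_1) over a field F, with [e_1,...,e_{n-1},e_{n+1}] = e_n, [e_1,...,e_n] = α·e_{n+1} (α ≠ 0), other basic products zero. Let φ be a δ-derivation with δ ≠ 1 and δ ≠ -1, with matrix entries β_{ij}. Then β_{n,n+1} = 0. -/
/-!
Write `T_i` for the tuple of all basis vectors except `e_i`. Replacing one slot of `T_i` by a
basis vector either repeats a vector, gives `T_i` back, or (inserting `e_i` itself) permutes the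
tuple into some `T_m`. Hence, in the `δ`-derivation identity for `[T_i]`, the coordinate along
another basis vector `e_{i'}` only sees the single term where `e_i` replaces `e_{i'}`, provided all
other `[T_m]` vanish. For type `(C_1)` and the adjacent pair `e_n`, `e_{n+1}` this gives
`β_{n,n+1} = δ α β_{n+1,n}` and `α β_{n+1,n} = δ β_{n,n+1}`, so `(1 - δ²) β_{n,n+1} = 0`.
-/

open Function

namespace Fin

variable {n : ℕ}

theorem exists_perm_eq_succAbove_comp {g : Fin n → Fin (n + 1)} (hg : Injective g)
    {m : Fin (n + 1)} (hm : ∀ p, g p ≠ m) : ∃ σ : Equiv.Perm (Fin n), g = m.succAbove ∘ σ := by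
  choose τ hτ using fun p => exists_succAbove_eq (hm p)
  have hτ_inj : Injective τ := fun p q hpq => hg (by rw [← hτ p, ← hτ q, hpq])
  exact ⟨Equiv.ofBijective τ (Finite.injective_iff_bijective.mp hτ_inj),
    funext fun p => (hτ p).symm⟩

theorem exists_perm_update_succAbove_self (i : Fin (n + 1)) (j : Fin n) :
    ∃ σ : Equiv.Perm (Fin n), update i.succAbove j i = (i.succAbove j).succAbove ∘ σ := by
  refine exists_perm_eq_succAbove_comp (fun p q hpq => ?_) fun p => ?_
  · rcases eq_or_ne p j with hp | hp <;> rcases eq_or_ne q j with hq | hq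
    · exact hp.trans hq.symm
    · rw [hp, update_self, update_of_ne hq] at hpq
      exact absurd hpq.symm (succAbove_ne i q)
    · rw [hq, update_self, update_of_ne hp] at hpq
      exact absurd hpq (succAbove_ne i p)
    · rw [update_of_ne hp, update_of_ne hq] at hpq
      exact succAbove_right_injective hpq
  · rcases eq_or_ne p j with rfl | hp
    · simp [(succAbove_ne i p).symm]
    · simpa [update_of_ne hp] using hp

theorem update_castSucc_succAbove_self (p : Fin n) :
    update p.castSucc.succAbove p p.castSucc = p.succ.succAbove := by
  funext q
  rcases lt_trichotomy q p with h | rfl | h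
  · rw [update_of_ne h.ne, succAbove_of_castSucc_lt _ _ (castSucc_lt_castSucc_iff.mpr h),
      succAbove_of_castSucc_lt _ _ (castSucc_lt_succ_iff.mpr h.le)]
  · simp
  · rw [update_of_ne h.ne', succAbove_of_le_castSucc _ _ (castSucc_le_castSucc_iff.mpr h.le),
      succAbove_of_le_castSucc _ _ (succ_le_castSucc_iff.mpr h)]

theorem update_succ_succAbove_self (p : Fin n) :
    update p.succ.succAbove p p.succ = p.castSucc.succAbove := by
  rw [← update_castSucc_succAbove_self, update_idem, ← succAbove_castSucc_self, update_eq_self]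

end Fin

section DeltaDerivation

variable {R A : Type*} [CommRing R] [AddCommGroup A] [Module R A]

theorem AlternatingMap.repr_map_update_succAbove {n : ℕ} (br : AlternatingMap R A A (Fin n))
    (b : Module.Basis (Fin (n + 1)) R A) {i i' : Fin (n + 1)} {p : Fin n}
    (hp : i.succAbove p = i') (hupd : update i.succAbove p i = i'.succAbove)
    (hvanish : ∀ m, m ≠ i → m ≠ i' → br (b ∘ m.succAbove) = 0)
    (hi' : b.repr (br (b ∘ i.succAbove)) i' = 0) (j : Fin n) (k : Fin (n + 1)) :
    b.repr (br (update (b ∘ i.succAbove) j (b k))) i' =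
      if j = p ∧ k = i then b.repr (br (b ∘ i'.succAbove)) i' else 0 := by
  rcases eq_or_ne k i with rfl | hk
  · rw [← comp_update]
    rcases eq_or_ne j p with rfl | hj
    · simp [hupd]
    obtain ⟨σ, hσ⟩ := Fin.exists_perm_update_succAbove_self k j
    have hzero := hvanish (k.succAbove j) (Fin.succAbove_ne k j)
      (hp ▸ fun h => hj (Fin.succAbove_right_injective h))
    rw [hσ, ← comp_assoc, br.map_perm, hzero]
    simp [hj]
  · obtain ⟨j', rfl⟩ := Fin.exists_succAbove_eq hk
    rw [if_neg fun h => hk h.2]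
    rcases eq_or_ne j' j with rfl | hj
    · rwa [← comp_apply (f := b), update_eq_self]
    · have hrepeat : update (b ∘ i.succAbove) j (b (i.succAbove j')) j' =
          update (b ∘ i.succAbove) j (b (i.succAbove j')) j := by
        rw [update_of_ne hj, update_self, comp_apply]
      simp [br.map_eq_zero_of_eq _ hrepeat hj]

def IsDeltaDerivation {ι : Type*} [Fintype ι] [DecidableEq ι] (br : AlternatingMap R A A ι)
    (δ : R) (φ : A →ₗ[R] A) : Prop :=
  ∀ x : ι → A, φ (br x) = δ • ∑ i, br (update x i (φ (x i)))

namespace IsDeltaDerivation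

theorem repr_apply {ι : Type*} [Fintype ι] [DecidableEq ι] {br : AlternatingMap R A A ι} {δ : R}
    {φ : A →ₗ[R] A} (hφ : IsDeltaDerivation br δ φ) {κ : Type*} [Fintype κ]
    (b : Module.Basis κ R A) (x : ι → A) (c : κ) :
    b.repr (φ (br x)) c =
      δ * ∑ j, ∑ k, b.repr (φ (x j)) k * b.repr (br (update x j (b k))) c := by
  rw [hφ, map_smul, Finsupp.smul_apply, smul_eq_mul, map_sum, Finsupp.coe_finsetSum,
    Finset.sum_apply]
  congr 1
  refine Finset.sum_congr rfl fun j _ => ?_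
  conv_lhs => rw [← b.sum_repr (φ (x j))]
  simp only [br.map_update_sum, br.map_update_smul, map_sum, map_smul, Finsupp.coe_finsetSum,
    Finset.sum_apply, Finsupp.smul_apply, smul_eq_mul]

theorem repr_apply_succAbove {n : ℕ} {br : AlternatingMap R A A (Fin n)} {δ : R}
    {φ : A →ₗ[R] A} (hφ : IsDeltaDerivation br δ φ) (b : Module.Basis (Fin (n + 1)) R A)
    {i i' : Fin (n + 1)} {p : Fin n}
    (hp : i.succAbove p = i') (hupd : update i.succAbove p i = i'.succAbove)
    (hvanish : ∀ m, m ≠ i → m ≠ i' → br (b ∘ m.succAbove) = 0)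
    (hi' : b.repr (br (b ∘ i.succAbove)) i' = 0) :
    b.repr (φ (br (b ∘ i.succAbove))) i' =
      δ * (b.repr (φ (b i')) i * b.repr (br (b ∘ i'.succAbove)) i') := by
  simp [hφ.repr_apply b, br.repr_map_update_succAbove b hp hupd hvanish hi', ite_and,
    Finset.sum_ite_irrel, hp]

end IsDeltaDerivation

end DeltaDerivation

/-- Type `(C_1)`: for a `δ`-derivation `φ` with `δ ≠ 1, -1`, the matrix
entry `β_{n,n+1}` vanishes. -/
theorem delta_derivation_C1_offdiag_zero
    {F A : Type*} [Field F] [AddCommGroup A] [Module F A] {n : ℕ} (hn : 2 ≤ n)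
    (b : Module.Basis (Fin (n + 1)) F A)
    (α : F)
    (br : AlternatingMap F A A (Fin n))
    (hbr : ∀ i : Fin (n + 1),
      br (b ∘ i.succAbove) =
        if (i : ℕ) = n - 1 then b i
        else if (i : ℕ) = n then α • b i
        else 0)
    (δ : F) (hδ1 : δ ≠ 1) (hδ2 : δ ≠ -1) (φ : A →ₗ[F] A)
    (hφ : ∀ x : Fin n → A,
      φ (br x) = δ • ∑ i, br (Function.update x i (φ (x i)))) :
    b.repr (φ (b ⟨n - 1, by omega⟩)) (Fin.last n) = 0 := by
  obtain ⟨m, rfl⟩ : ∃ m, n = m + 1 := ⟨n - 1, by omega⟩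
  set p := Fin.last m
  have hne : p.castSucc ≠ p.succ := Fin.castSucc_lt_succ.ne
  have hbr_castSucc : br (b ∘ p.castSucc.succAbove) = b p.castSucc := by simp [hbr, p]
  have hbr_succ : br (b ∘ p.succ.succAbove) = α • b p.succ := by rw [hbr]; simp [p]
  have hvanish : ∀ k, k ≠ p.castSucc → k ≠ p.succ → br (b ∘ k.succAbove) = 0 := by
    intro k h1 h2
    have h1' : (k : ℕ) ≠ m := fun h => h1 (Fin.ext (by simpa [p] using h))
    have h2' : (k : ℕ) ≠ m + 1 := fun h => h2 (Fin.ext (by simpa [p] using h))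
    simp [hbr, h1', h2']
  have hβ := IsDeltaDerivation.repr_apply_succAbove hφ b (Fin.succAbove_castSucc_self p)
    (Fin.update_castSucc_succAbove_self p) hvanish (by simp [hbr_castSucc, hne])
  have hβ' := IsDeltaDerivation.repr_apply_succAbove hφ b (Fin.succAbove_succ_self p)
    (Fin.update_succ_succAbove_self p) (fun k h1 h2 => hvanish k h2 h1)
    (by simp [hbr_succ, hne.symm])
  simp only [hbr_castSucc, hbr_succ, map_smul, Module.Basis.repr_self, Finsupp.single_eq_same,
    Finsupp.smul_apply, smul_eq_mul, mul_one] at hβ hβ'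
  show b.repr (φ (b p.castSucc)) p.succ = 0
  have hδβ : (1 - δ) * (1 + δ) * b.repr (φ (b p.castSucc)) p.succ = 0 := by
    linear_combination hβ + δ * hβ'
  have hδ : (1 - δ) * (1 + δ) ≠ 0 :=
    mul_ne_zero (sub_ne_zero.2 hδ1.symm) fun h => hδ2 (by linear_combination h)
  exact (mul_eq_zero.1 hδβ).resolve_left hδ
end

section
/- Let A be the (n+1)-dimensional n-ary algebra of type (D_{n+1}) over a field F of characteristic zero (the simple n-ary Filippov algebra, with [e_1,...,ê_i,...,e_{n+1}] = e_i for all i). Then the linear map φ defined by an antisymmetric-with-signs matrix: φ(e_i) = Σ_{j≠i} (-1)^{i-j} a_{ji} e_j + a_{ii} e_i, where a_{ij} = (-1)^{i-j} a_{ji} for i ≠ j and Σ_i a_{ii} = 0, is a (-1)-derivation (antiderivation) of A; in particular, A possesses nonzero antiderivations that are not in the centroid. -/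
/-!
Coordinatewise, `br` is a cross product: `(-1)^k * b.coord k (br x) = det (b k, x)`, where `det`
is the determinant in the basis `b`. Differentiating the determinant gives
`∑ i, det (w, …, φ (x i), …) = trace φ * det (w, x) - det (φ w, x)`, so when `trace φ = 0` the
`k`-th twisted coordinate of `-∑ i, br (…, φ (x i), …)` is `det (φ (b k), x)`. The twisted
symmetry `a i j = (-1)^(i+j) a j i` says that
`(-1)^k * b.coord k ∘ φ = ∑ j, a k j * (-1)^j * b.coord j`, which makes the `k`-th twisted
coordinate of `φ (br x)` equal to `det (φ (b k), x)` as well.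

The diagonal map `diag (1, -1, 0, …, 0)` is such an antiderivation; it is not in the centroid,
since evaluating the centroid identity on `b 1, …, b n` gives `b 0 = -b 0`.
-/

open Function Finset

theorem MultilinearMap.compLinearMap_update_id_apply {R M N ι : Type*} [CommSemiring R]
    [AddCommMonoid M] [Module R M] [AddCommMonoid N] [Module R N] [DecidableEq ι]
    (f : MultilinearMap R (fun _ : ι => M) N) (φ : M →ₗ[R] M) (i : ι) (v : ι → M) :
    f.compLinearMap (update (fun _ => LinearMap.id) i φ) v = f (update v i (φ (v i))) := by
  rw [MultilinearMap.compLinearMap_apply]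
  congr 1
  funext j
  rcases eq_or_ne j i with rfl | hj <;> simp [*]

namespace AlternatingMap

variable {R M N : Type*} [CommSemiring R] [AddCommMonoid M] [Module R M]
  [AddCommGroup N] [Module R N]

theorem ext_basis_succAbove {n : ℕ} {f g : M [⋀^Fin n]→ₗ[R] N}
    (b : Module.Basis (Fin (n + 1)) R M)
    (h : ∀ k : Fin (n + 1), f (b ∘ k.succAbove) = g (b ∘ k.succAbove)) : f = g := by
  refine b.ext_alternating fun v hv => ?_
  obtain ⟨k, hk⟩ : ∃ k, ∀ t, v t ≠ k := by
    by_contra! hsurj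
    simpa using Fintype.card_le_of_surjective v hsurj
  choose τ hτ using fun t => Fin.exists_succAbove_eq (hk t)
  have hτ_bij : τ.Bijective :=
    Finite.injective_iff_bijective.1 fun s t hst => hv (by rw [← hτ s, ← hτ t, hst])
  have hv_eq : (fun t => b (v t)) = (b ∘ k.succAbove) ∘ Equiv.ofBijective τ hτ_bij := by
    funext t
    simp [hτ]
  rw [hv_eq, f.map_perm, g.map_perm, h]

variable {ι : Type*} [Fintype ι] [DecidableEq ι]

def linearDerivComp (f : M [⋀^ι]→ₗ[R] N) (φ : M →ₗ[R] M) : M [⋀^ι]→ₗ[R] N where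
  toMultilinearMap := ∑ i, f.toMultilinearMap.compLinearMap (update (fun _ => LinearMap.id) i φ)
  map_eq_zero_of_eq' v p q hpq hne := by
    simp only [MultilinearMap.toFun_eq_coe, _root_.sum_apply,
      MultilinearMap.compLinearMap_update_id_apply, coe_multilinearMap]
    rw [← sum_subset (subset_univ {p, q}) fun i _ hi => ?_, sum_pair hne]
    · have hswap : update v q (φ (v q)) = update v p (φ (v p)) ∘ Equiv.swap p q := by
        rw [update_comp_equiv, Equiv.symm_swap, Equiv.swap_apply_left, ← hpq]
        congr 1
        rw [Equiv.comp_swap_eq_update, hpq, update_eq_self, ← hpq, update_eq_self]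
      rw [hswap, add_comm]
      exact f.map_swap_add _ hne
    · simp only [mem_insert, mem_singleton, not_or] at hi
      exact f.map_eq_zero_of_eq _
        (by rw [update_of_ne (Ne.symm hi.1), update_of_ne (Ne.symm hi.2), hpq]) hne

theorem linearDerivComp_apply (f : M [⋀^ι]→ₗ[R] N) (φ : M →ₗ[R] M) (v : ι → M) :
    f.linearDerivComp φ v = ∑ i, f (update v i (φ (v i))) := by
  simp only [linearDerivComp, AlternatingMap.coe_mk, _root_.sum_apply,
    MultilinearMap.compLinearMap_update_id_apply, coe_multilinearMap]

end AlternatingMap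

namespace Module.Basis

variable {R M : Type*} [CommRing R] [AddCommGroup M] [Module R M]

theorem det_update_self {ι : Type*} [Fintype ι] [DecidableEq ι] (b : Basis ι R M) (i : ι)
    (v : M) : b.det (update b i v) = b.coord i v := by
  suffices b.det.toMultilinearMap.toLinearMap b i = b.coord i from LinearMap.congr_fun this v
  refine b.ext fun j => ?_
  rw [MultilinearMap.toLinearMap_apply, coord_apply, repr_self]
  rcases eq_or_ne j i with rfl | hji
  · simp [det_self]
  · rw [Finsupp.single_eq_of_ne hji.symm]
    exact b.det.map_eq_zero_of_eq _ (by simp [update_of_ne hji]) hji.symm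

theorem det_linearDerivComp {ι : Type*} [Fintype ι] [DecidableEq ι] (b : Basis ι R M)
    (φ : M →ₗ[R] M) : b.det.linearDerivComp φ = LinearMap.trace R M φ • b.det := by
  rw [(b.det.linearDerivComp φ).eq_smul_basis_det b, AlternatingMap.linearDerivComp_apply,
    LinearMap.trace_eq_matrix_trace R b, Matrix.trace]
  simp [det_update_self, LinearMap.toMatrix_apply]

theorem neg_one_pow_smul_coord_comp {m : ℕ} (b : Basis (Fin m) R M)
    {a : Fin m → Fin m → R} (ha : ∀ i j, i ≠ j → a i j = (-1) ^ ((i : ℕ) + (j : ℕ)) * a j i)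
    {φ : M →ₗ[R] M} (hφ : ∀ i, φ (b i) = ∑ j, a i j • b j) (k : Fin m) :
    (-1 : R) ^ (k : ℕ) • (b.coord k ∘ₗ φ) = ∑ j, (a k j * (-1) ^ (j : ℕ)) • b.coord j := by
  have hsymm : ∀ l, (-1 : R) ^ (k : ℕ) * a l k = a k l * (-1) ^ (l : ℕ) := by
    intro l
    rcases eq_or_ne l k with rfl | hlk
    · ring
    have hsq : ((-1 : R) ^ (k : ℕ)) ^ 2 = 1 := by rw [← pow_mul, pow_mul']; simp
    linear_combination (-1 : R) ^ (l : ℕ) * a k l * hsq + (-1 : R) ^ (k : ℕ) * ha l k hlk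
  refine b.ext fun l => ?_
  simp [hφ, Finsupp.single_apply, hsymm]

variable {n : ℕ}

theorem sum_det_cons_update (b : Basis (Fin (n + 1)) R M) (φ : M →ₗ[R] M) (w : M)
    (x : Fin n → M) :
    ∑ i, b.det (Fin.cons w (update x i (φ (x i)))) =
      LinearMap.trace R M φ * b.det (Fin.cons w x) - b.det (Fin.cons (φ w) x) := by
  have h := congr($(b.det_linearDerivComp φ) (Fin.cons w x))
  rw [AlternatingMap.linearDerivComp_apply, Fin.sum_univ_succ, AlternatingMap.smul_apply,
    smul_eq_mul] at h
  simp only [Fin.cons_zero, Fin.cons_succ, Fin.update_cons_zero, ← Fin.cons_update] at h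
  rw [← h]
  ring

theorem det_cons_succAbove (b : Basis (Fin (n + 1)) R M) (j k : Fin (n + 1)) :
    b.det (Fin.cons (b j) (b ∘ k.succAbove)) = if j = k then (-1) ^ (k : ℕ) else 0 := by
  split_ifs with hjk
  · subst hjk
    rw [show b ∘ j.succAbove = j.removeNth b from rfl, Fin.cons_removeNth_eq_comp_cycleRange_symm,
      AlternatingMap.map_perm, Equiv.Perm.sign_symm, Fin.sign_cycleRange, det_self]
    simp [Units.smul_def]
  · obtain ⟨i, rfl⟩ := Fin.exists_succAbove_eq hjk
    exact b.det.map_eq_zero_of_eq _ (i := 0) (j := i.succ) (by simp) (Fin.succ_ne_zero i).symm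

theorem det_cons_eq_neg_one_pow_mul_coord (b : Basis (Fin (n + 1)) R M)
    {br : M [⋀^Fin n]→ₗ[R] M} (hbr : ∀ i, br (b ∘ i.succAbove) = b i) (k : Fin (n + 1))
    (x : Fin n → M) : b.det (Fin.cons (b k) x) = (-1) ^ (k : ℕ) * b.coord k (br x) := by
  have h : b.det.curryLeft (b k) = (-1 : R) ^ (k : ℕ) • (b.coord k).compAlternatingMap br := by
    refine AlternatingMap.ext_basis_succAbove b fun m => ?_
    rw [AlternatingMap.curryLeft_apply_apply, Matrix.vecCons, det_cons_succAbove]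
    split_ifs with h <;> simp [hbr, h]
  exact congr($h x)

end Module.Basis

section Antiderivation

variable {R M : Type*} [CommRing R] [AddCommGroup M] [Module R M] {n : ℕ}

theorem map_apply_eq_neg_sum_update_of_twisted_symm (b : Module.Basis (Fin (n + 1)) R M)
    {br : M [⋀^Fin n]→ₗ[R] M} (hbr : ∀ i, br (b ∘ i.succAbove) = b i)
    {a : Fin (n + 1) → Fin (n + 1) → R}
    (ha : ∀ i j, i ≠ j → a i j = (-1) ^ ((i : ℕ) + (j : ℕ)) * a j i)
    (htr : ∑ i, a i i = 0) {φ : M →ₗ[R] M} (hφ : ∀ i, φ (b i) = ∑ j, a i j • b j)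
    (x : Fin n → M) : φ (br x) = -∑ i, br (update x i (φ (x i))) := by
  have htrace : LinearMap.trace R M φ = 0 := by
    rw [LinearMap.trace_eq_matrix_trace R b, Matrix.trace]
    simpa only [Matrix.diag, LinearMap.toMatrix_apply, hφ, b.repr_sum_self] using htr
  have hdet_cons : ∀ k, b.det (Fin.cons (φ (b k)) x) = (-1) ^ (k : ℕ) * b.coord k (φ (br x)) := by
    intro k
    have h := congr($(b.neg_one_pow_smul_coord_comp ha hφ k) (br x))
    simp only [LinearMap.smul_apply, LinearMap.comp_apply, smul_eq_mul, LinearMap.sum_apply] at h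
    rw [h, hφ, ← Fin.update_cons_zero 0, AlternatingMap.map_update_sum]
    simp only [AlternatingMap.map_update_smul]
    simp only [Fin.update_cons_zero, b.det_cons_eq_neg_one_pow_mul_coord hbr, smul_eq_mul,
      mul_assoc]
  refine b.ext_elem fun k => (isUnit_neg_one.pow (k : ℕ)).mul_left_cancel ?_
  rw [← b.coord_apply, ← b.coord_apply, ← hdet_cons, map_neg, map_sum, mul_neg, mul_sum]
  simp only [← b.det_cons_eq_neg_one_pow_mul_coord hbr, b.sum_det_cons_update, htrace]
  ring

theorem exists_antiderivation_not_mem_centroid (b : Module.Basis (Fin (n + 2)) R M)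
    {br : M [⋀^Fin (n + 1)]→ₗ[R] M} (hbr : ∀ i, br (b ∘ i.succAbove) = b i) (h2 : (2 : R) ≠ 0) :
    ∃ ψ : M →ₗ[R] M, ψ ≠ 0 ∧ (∀ x, ψ (br x) = -∑ i, br (update x i (ψ (x i)))) ∧
      ¬ ∀ i x, ψ (br x) = br (update x i (ψ (x i))) := by
  set d : Fin (n + 2) → R := Pi.single 0 1 - Pi.single 1 1
  set ψ : M →ₗ[R] M := b.constr R fun i => d i • b i
  have hψ : ∀ i, ψ (b i) = d i • b i := fun i => b.constr_basis R _ i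
  have hψ0 : ψ (b 0) = b 0 := by simp [hψ, d]
  have hψ1 : ψ (b 1) = -b 1 := by simp [hψ, d]
  refine ⟨ψ, fun h => ?_,
    map_apply_eq_neg_sum_update_of_twisted_symm b hbr (a := Matrix.diagonal d) ?_ ?_ ?_,
    fun hcent => h2 ?_⟩
  · have : Nontrivial R := nontrivial_of_ne _ _ h2
    exact b.ne_zero 0 (by rw [← hψ0, h, LinearMap.zero_apply])
  · intro i j hij
    simp [Matrix.diagonal_apply_ne _ hij, Matrix.diagonal_apply_ne _ hij.symm]
  · simp [d, sum_sub_distrib]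
  · simp [hψ, Matrix.diagonal_apply, ite_smul]
  · have hx0 : (b ∘ Fin.succAbove 0) 0 = b 1 := by simp [Fin.succ_zero_eq_one]
    have h := hcent 0 (b ∘ Fin.succAbove 0)
    rw [hbr, hψ0, hx0, hψ1, ← neg_one_smul R (b 1), ← hx0, br.map_update_smul, update_eq_self,
      hbr, neg_one_smul] at h
    have h2b : (2 : R) • b 0 = 0 := by rw [two_smul]; nth_rw 1 [h]; exact neg_add_cancel _
    simpa using congr(b.coord 0 $h2b)

end Antiderivation

/-- Type `(D_{n+1})` (the simple Filippov algebra): every matrix `a` with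
`a_{ij} = (-1)^{i-j} a_{ji}` (`i ≠ j`) and zero trace defines a `(-1)`-derivation
(antiderivation); in particular there exist nonzero antiderivations not lying in
the centroid. -/
theorem simple_Filippov_antiderivations
    {F A : Type*} [Field F] [CharZero F] [AddCommGroup A] [Module F A]
    {n : ℕ} (hn : 2 ≤ n)
    (b : Module.Basis (Fin (n + 1)) F A)
    (br : AlternatingMap F A A (Fin n))
    (hbr : ∀ i : Fin (n + 1), br (b ∘ i.succAbove) = b i)
    (a : Fin (n + 1) → Fin (n + 1) → F)
    (ha : ∀ i j : Fin (n + 1), i ≠ j →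
      a i j = (-1 : F) ^ ((i : ℕ) + (j : ℕ)) * a j i)
    (htr : ∑ i : Fin (n + 1), a i i = 0)
    (φ : A →ₗ[F] A)
    (hφ : φ = b.constr F (fun i : Fin (n + 1) => ∑ j, a i j • b j)) :
    (∀ x : Fin n → A,
      φ (br x) = (-1 : F) • ∑ i, br (Function.update x i (φ (x i)))) ∧
    ∃ ψ : A →ₗ[F] A, ψ ≠ 0 ∧
      (∀ x : Fin n → A,
        ψ (br x) = (-1 : F) • ∑ i, br (Function.update x i (ψ (x i)))) ∧
      ¬ (∀ (i : Fin n) (x : Fin n → A),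
        ψ (br x) = br (Function.update x i (ψ (x i)))) := by
  obtain ⟨N, rfl⟩ : ∃ N, n = N + 1 := ⟨n - 1, by omega⟩
  have hφb : ∀ i, φ (b i) = ∑ j, a i j • b j := fun i => by rw [hφ, b.constr_basis]
  simp only [neg_one_smul]
  exact ⟨map_apply_eq_neg_sum_update_of_twisted_symm b hbr ha htr hφb,
    exists_antiderivation_not_mem_centroid b hbr two_ne_zero⟩
end
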